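/- Let Q be an O-directionally simple polytope such that the facial orientation O is the Hasse diagram of a lattice L = P(Q,O), and let γ_1, γ_2 be maximal chains of L. Suppose there exist x <_L x′ with x, x′ ∈ γ_1 ∩ γ_2 such that x is covered by distinct elements in γ_1 and γ_2. Then there exists a path γ_1 = δ_0, δ_1, …, δ_N = γ_2 in the move graph M(srce(Q), sink(Q), O), all of whose chains contain every vertex of γ_1 ∩ γ_2, together with an index k ≤ N such that δ_i agrees with γ_1 on the interval [x′, sink(Q)] for all i ≤ k and δ_k agrees with γ_2 on the interval [srce(Q), x′]. -/

import Mathlib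

open Relation

/-- Points of `ℝ^d`. -/
abbrev Pt (d : ℕ) := Fin d → ℝ

/-- A polytope: the convex hull of a finite set. -/
def IsPolytope {d : ℕ} (Q : Set (Pt d)) : Prop :=
  ∃ S : Finset (Pt d), Q = convexHull ℝ (↑S : Set (Pt d))

/-- The segment from `x` to `y` is an edge (1-dimensional exposed face, i.e. an
exposed face which is a segment between distinct points) of `Q`. -/
def PEdge {d : ℕ} (Q : Set (Pt d)) (x y : Pt d) : Prop :=
  x ≠ y ∧ IsExposed ℝ Q (segment ℝ x y)

/-- `O` is an acyclic orientation of the 1-skeleton of `Q`: it relates exactly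
the endpoint pairs of edges, one direction per edge, with no directed cycles. -/
def IsOrientation {d : ℕ} (Q : Set (Pt d)) (O : Pt d → Pt d → Prop) : Prop :=
  (∀ x y, O x y → PEdge Q x y) ∧
  (∀ x y, PEdge Q x y → (O x y ∨ O y x)) ∧
  (∀ x y, O x y → ¬ O y x) ∧
  (∀ x, ¬ Relation.TransGen O x x)

/-- `x` is a source of the restriction of `O` to `F`: a vertex of `F` with no
incoming edge from `F`. -/
def IsSrcOf {d : ℕ} (O : Pt d → Pt d → Prop) (F : Set (Pt d)) (x : Pt d) : Prop :=
  x ∈ Set.extremePoints ℝ F ∧ ∀ y ∈ F, ¬ O y x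

/-- `x` is a sink of the restriction of `O` to `F`: a vertex of `F` with no
outgoing edge into `F`. -/
def IsSnkOf {d : ℕ} (O : Pt d → Pt d → Prop) (F : Set (Pt d)) (x : Pt d) : Prop :=
  x ∈ Set.extremePoints ℝ F ∧ ∀ y ∈ F, ¬ O x y

/-- `O` is a facial orientation of `Q`: an acyclic orientation of the 1-skeleton
whose restriction to each nonempty (exposed) face has a unique source and a
unique sink. -/
def IsFacial {d : ℕ} (Q : Set (Pt d)) (O : Pt d → Pt d → Prop) : Prop :=
  IsOrientation Q O ∧
  ∀ F : Set (Pt d), IsExposed ℝ Q F → F.Nonempty →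
    (∃! x, IsSrcOf O F x) ∧ (∃! x, IsSnkOf O F x)

/-- The dimension of a subset of `ℝ^d` (the dimension of its affine hull). -/
noncomputable def pdim {d : ℕ} (F : Set (Pt d)) : ℕ := Module.finrank ℝ ↥(vectorSpan ℝ F)

/-- `F` is the minimal (exposed) face of `Q` containing the point `x` and the
segments from `x` to each element of `E`. -/
def MinFaceCont {d : ℕ} (Q : Set (Pt d)) (x : Pt d) (E : Set (Pt d)) (F : Set (Pt d)) : Prop :=
  IsExposed ℝ Q F ∧ x ∈ F ∧ (∀ a ∈ E, segment ℝ x a ⊆ F) ∧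
    ∀ F', IsExposed ℝ Q F' → x ∈ F' → (∀ a ∈ E, segment ℝ x a ⊆ F') → F ⊆ F'

/-- `Q` is `O`-directionally simple: for each vertex `x` of `Q` and each set `E`
of heads of edges outgoing from `x`, the minimal face `F_E` containing `x` and
these edges exists and has dimension `|E|`, and distinct sets `E` span distinct
faces. -/
def DirSimple {d : ℕ} (Q : Set (Pt d)) (O : Pt d → Pt d → Prop) : Prop :=
  ∀ x ∈ Set.extremePoints ℝ Q, ∀ E : Finset (Pt d), (∀ a ∈ E, O x a) →
    (∃ F, MinFaceCont Q x ↑E F ∧ pdim F = E.card) ∧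
    (∀ E' : Finset (Pt d), (∀ a ∈ E', O x a) → ∀ F F',
      MinFaceCont Q x ↑E F → MinFaceCont Q x ↑E' F' → E ≠ E' → F ≠ F')

/-- `O` is the Hasse diagram (transitive reduction) of its reflexive-transitive
closure: every `O`-step is a cover relation of the 1-skeleton poset `P(Q,O)`. -/
def IsHasse {d : ℕ} (O : Pt d → Pt d → Prop) : Prop :=
  ∀ x y, O x y → ∀ z, Relation.ReflTransGen O x z → Relation.ReflTransGen O z y →
    z = x ∨ z = y

/-- The 1-skeleton poset `L = P(Q,O)` (the reflexive-transitive closure of `O`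
on the vertices of `Q`) is a lattice: any two vertices have a least upper bound
and a greatest lower bound. -/
def SkLattice {d : ℕ} (Q : Set (Pt d)) (O : Pt d → Pt d → Prop) : Prop :=
  ∀ x ∈ Set.extremePoints ℝ Q, ∀ y ∈ Set.extremePoints ℝ Q,
    (∃ j ∈ Set.extremePoints ℝ Q, Relation.ReflTransGen O x j ∧
      Relation.ReflTransGen O y j ∧
      ∀ z ∈ Set.extremePoints ℝ Q, Relation.ReflTransGen O x z →
        Relation.ReflTransGen O y z → Relation.ReflTransGen O j z) ∧
    (∃ m ∈ Set.extremePoints ℝ Q, Relation.ReflTransGen O m x ∧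
      Relation.ReflTransGen O m y ∧
      ∀ z ∈ Set.extremePoints ℝ Q, Relation.ReflTransGen O z x →
        Relation.ReflTransGen O z y → Relation.ReflTransGen O z m)

/-- The set of atoms of the interval `[u,v]` in the poset `P(Q,O)`: elements of
the interval covering `u`. -/
def atomSet {d : ℕ} (O : Pt d → Pt d → Prop) (u v : Pt d) : Set (Pt d) :=
  {x | Relation.ReflTransGen O u x ∧ x ≠ u ∧ Relation.ReflTransGen O x v ∧
    ∀ z, Relation.ReflTransGen O u z → Relation.ReflTransGen O z x → z = u ∨ z = x}

/-- A saturated chain from `u` to `v` in `P(Q,O)` (with `O` the Hasse diagram):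
a list of vertices starting at `u`, ending at `v`, with consecutive entries
related by `O`. -/
def SatChain {d : ℕ} (O : Pt d → Pt d → Prop) (u v : Pt d) (c : List (Pt d)) : Prop :=
  List.Chain' O c ∧ c.head? = some u ∧ c.getLast? = some v

/-- Two chains differ by a move across a 2-dimensional face `F` of `Q`: they
agree outside `F`, and within `F` they follow the two distinct directed paths
along the boundary of `F` from its source to its sink. -/
def MoveAdj {d : ℕ} (Q : Set (Pt d)) (O : Pt d → Pt d → Prop)
    (γ1 γ2 : List (Pt d)) : Prop :=
  ∃ F : Set (Pt d), IsExposed ℝ Q F ∧ pdim F = 2 ∧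
    ∃ p s m1 m2 : List (Pt d),
      γ1 = p ++ m1 ++ s ∧ γ2 = p ++ m2 ++ s ∧ m1 ≠ m2 ∧
      (∀ x ∈ m1, x ∈ F) ∧ (∀ x ∈ m2, x ∈ F) ∧
      (∃ a, m1.head? = some a ∧ m2.head? = some a ∧ IsSrcOf O F a) ∧
      (∃ b, m1.getLast? = some b ∧ m2.getLast? = some b ∧ IsSnkOf O F b)

/-!
Any two maximal chains of an interval `[u, v]` are joined in the move graph through chains that
keep all their common vertices. If they leave `u` along different edges `u → a`, `u → b`, the
sink of the 2-face spanned by these edges is the join `a ∨ b`, hence lies below the first common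
vertex `w` above `u`; rerouting both chains through that face below `w` makes them differ by one
move, and induction on the shorter intervals `[a, w]`, `[b, w]`, `[w, v]` does the rest. The sink
is the join because, by downward induction, each out-edge of a vertex of a 2-face that stays below
the sink lies in the face (a vertex of a polygon has only two neighbours). The theorem follows by
first connecting the parts of `γ1`, `γ2` below `x'`, then the parts above.
-/

open Set Relation

section Convex

variable {E : Type*} [AddCommGroup E] [Module ℝ E]

theorem left_mem_extremePoints_segment (x y : E) : x ∈ extremePoints ℝ (segment ℝ x y) := by
  refine mem_extremePoints_iff_forall_segment.2 ⟨left_mem_segment ℝ x y, ?_⟩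
  intro x₁ h₁ x₂ h₂ hx
  rw [segment_eq_image_lineMap] at h₁ h₂
  obtain ⟨s, ⟨hs, -⟩, rfl⟩ := h₁
  obtain ⟨t, ⟨ht, -⟩, rfl⟩ := h₂
  rw [mem_segment_iff_wbtw] at hx
  simp only [AffineMap.lineMap_apply] at hx ⊢
  rcases wbtw_or_wbtw_smul_vadd_of_nonneg x (y -ᵥ x) hs ht with h | h
  · exact Or.inl ((wbtw_swap_left_iff ℝ _).1 ⟨h, hx⟩).symm
  · exact Or.inr ((wbtw_swap_left_iff ℝ _).1 ⟨h, hx.symm⟩).symm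

theorem not_collinear_of_mem_extremePoints {A : Set E} {x y z : E}
    (hx : x ∈ extremePoints ℝ A) (hy : y ∈ extremePoints ℝ A) (hz : z ∈ extremePoints ℝ A)
    (hxy : x ≠ y) (hxz : x ≠ z) (hyz : y ≠ z) : ¬ Collinear ℝ {x, y, z} := fun h => by
  rcases h.wbtw_or_wbtw_or_wbtw with h | h | h
  · rcases (mem_extremePoints_iff_forall_segment.1 hy).2 x hx.1 z hz.1 h.mem_segment with h | h
    exacts [hxy h, hyz h.symm]
  · rcases (mem_extremePoints_iff_forall_segment.1 hz).2 y hy.1 x hx.1 h.mem_segment with h | h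
    exacts [hyz h, hxz h]
  · rcases (mem_extremePoints_iff_forall_segment.1 hx).2 z hz.1 y hy.1 h.mem_segment with h | h
    exacts [hxz h.symm, hxy h.symm]

end Convex

theorem eq_zero_of_neg_coeffs {a b c p₁₂ p₁₃ p₂₁ p₂₃ p₃₁ p₃₂ : ℝ} (h₁₂ : p₁₂ < 0)
    (h₁₃ : p₁₃ < 0) (h₂₁ : p₂₁ < 0) (h₂₃ : p₂₃ < 0) (h₃₁ : p₃₁ < 0) (h₃₂ : p₃₂ < 0)
    (e₁ : b * p₁₂ + c * p₁₃ = 0) (e₂ : a * p₂₁ + c * p₂₃ = 0) (e₃ : a * p₃₁ + b * p₃₂ = 0) :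
    a = 0 ∧ b = 0 ∧ c = 0 := by
  rcases lt_trichotomy c 0 with hc | rfl | hc
  · have hb : 0 < b := by nlinarith
    have ha : 0 < a := by nlinarith
    nlinarith
  · exact ⟨by simpa [h₂₁.ne] using e₂, by simpa [h₁₂.ne] using e₁, rfl⟩
  · have hb : b < 0 := by nlinarith
    have ha : a < 0 := by nlinarith
    nlinarith

section Polytope

variable {d : ℕ} {Q : Set (Pt d)}

theorem IsPolytope.finite_extremePoints (hQ : IsPolytope Q) : (extremePoints ℝ Q).Finite := by
  obtain ⟨S, rfl⟩ := hQ
  exact S.finite_toSet.subset extremePoints_convexHull_subset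

theorem PEdge.symm {x y : Pt d} (h : PEdge Q x y) : PEdge Q y x :=
  ⟨h.1.symm, segment_symm ℝ x y ▸ h.2⟩

theorem PEdge.left_mem_extremePoints {x y : Pt d} (h : PEdge Q x y) : x ∈ extremePoints ℝ Q :=
  h.2.isExtreme.extremePoints_subset_extremePoints (left_mem_extremePoints_segment x y)

theorem PEdge.right_mem_extremePoints {x y : Pt d} (h : PEdge Q x y) : y ∈ extremePoints ℝ Q :=
  h.symm.left_mem_extremePoints

theorem PEdge.exists_functional {v y : Pt d} (h : PEdge Q v y) :
    ∃ l : Pt d →L[ℝ] ℝ, l y = l v ∧ ∀ z ∈ extremePoints ℝ Q, z ≠ v → z ≠ y → l z < l v := by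
  obtain ⟨l, hl⟩ := h.2 ⟨v, left_mem_segment ℝ v y⟩
  have hmem : ∀ z, z ∈ segment ℝ v y ↔ z ∈ Q ∧ ∀ w ∈ Q, l w ≤ l z := by simp [hl]
  have hv := (hmem v).1 (left_mem_segment ℝ v y)
  have hy := (hmem y).1 (right_mem_segment ℝ v y)
  refine ⟨l, le_antisymm (hv.2 y hy.1) (hy.2 v hv.1), fun z hz hzv hzy => ?_⟩
  refine lt_of_le_of_ne (hv.2 z hz.1) fun hzeq => ?_
  have hzseg := (hmem z).2 ⟨hz.1, fun w hw => hzeq ▸ hv.2 w hw⟩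
  rcases (mem_extremePoints_iff_forall_segment.1 hz).2 v hv.1 y hy.1 hzseg with h | h
  exacts [hzv h.symm, hzy h.symm]

/-- The three edge vectors at `v` are linearly dependent; evaluating the dependence on the
functionals exposing the three edges forces all its coefficients to vanish. -/
theorem not_three_pEdges_of_pdim_le_two {F : Set (Pt d)} (hdim : pdim F ≤ 2)
    {v y₁ y₂ y₃ : Pt d} (hv : v ∈ F) (h₁ : y₁ ∈ F) (h₂ : y₂ ∈ F) (h₃ : y₃ ∈ F)
    (e₁ : PEdge Q v y₁) (e₂ : PEdge Q v y₂) (e₃ : PEdge Q v y₃)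
    (h₁₂ : y₁ ≠ y₂) (h₁₃ : y₁ ≠ y₃) (h₂₃ : y₂ ≠ y₃) : False := by
  let u : Fin 3 → vectorSpan ℝ F := ![⟨y₁ -ᵥ v, vsub_mem_vectorSpan ℝ h₁ hv⟩,
    ⟨y₂ -ᵥ v, vsub_mem_vectorSpan ℝ h₂ hv⟩, ⟨y₃ -ᵥ v, vsub_mem_vectorSpan ℝ h₃ hv⟩]
  have hdep : ¬ LinearIndependent ℝ u := fun hu => by
    have := hu.fintype_card_le_finrank
    simp only [Fintype.card_fin] at this
    exact absurd (this.trans hdim) (by norm_num)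
  obtain ⟨g, hg, i, hi⟩ := Fintype.not_linearIndependent_iff.1 hdep
  have hsum : g 0 • (y₁ - v) + g 1 • (y₂ - v) + g 2 • (y₃ - v) = 0 := by
    simpa [Fin.sum_univ_three, u] using congrArg Subtype.val hg
  have heval : ∀ l : Pt d →L[ℝ] ℝ,
      g 0 * (l y₁ - l v) + g 1 * (l y₂ - l v) + g 2 * (l y₃ - l v) = 0 := fun l => by
    simpa using congrArg l hsum
  obtain ⟨l₁, hl₁, hlt₁⟩ := e₁.exists_functional
  obtain ⟨l₂, hl₂, hlt₂⟩ := e₂.exists_functional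
  obtain ⟨l₃, hl₃, hlt₃⟩ := e₃.exists_functional
  have hv₁ := e₁.right_mem_extremePoints
  have hv₂ := e₂.right_mem_extremePoints
  have hv₃ := e₃.right_mem_extremePoints
  have := eq_zero_of_neg_coeffs (a := g 0) (b := g 1) (c := g 2)
    (sub_neg.2 (hlt₁ y₂ hv₂ e₂.1.symm h₁₂.symm)) (sub_neg.2 (hlt₁ y₃ hv₃ e₃.1.symm h₁₃.symm))
    (sub_neg.2 (hlt₂ y₁ hv₁ e₁.1.symm h₁₂)) (sub_neg.2 (hlt₂ y₃ hv₃ e₃.1.symm h₂₃.symm))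
    (sub_neg.2 (hlt₃ y₁ hv₁ e₁.1.symm h₁₃)) (sub_neg.2 (hlt₃ y₂ hv₂ e₂.1.symm h₂₃))
    (by simpa [hl₁] using heval l₁) (by simpa [hl₂] using heval l₂)
    (by simpa [hl₃] using heval l₃)
  fin_cases i <;> simp_all

theorem IsExposed.eq_of_subset_of_pdim_le {F G : Set (Pt d)} (hF : IsExposed ℝ Q F)
    (hG : IsExposed ℝ Q G) (hFG : F ⊆ G) (hne : F.Nonempty) (hdim : pdim G ≤ pdim F) :
    F = G := by
  obtain ⟨l, hl⟩ := hF hne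
  obtain ⟨p, hp⟩ := hne
  have hmem : ∀ z, z ∈ F ↔ z ∈ Q ∧ ∀ w ∈ Q, l w ≤ l z := by simp [hl]
  have hker : vectorSpan ℝ F ≤ LinearMap.ker (l : Pt d →ₗ[ℝ] ℝ) := by
    rw [vectorSpan_def, Submodule.span_le]
    rintro _ ⟨z₁, hz₁, z₂, hz₂, rfl⟩
    rw [hmem] at hz₁ hz₂
    simp [le_antisymm (hz₂.2 z₁ hz₁.1) (hz₁.2 z₂ hz₂.1)]
  have hspan : vectorSpan ℝ F = vectorSpan ℝ G :=
    Submodule.eq_of_le_of_finrank_le (vectorSpan_mono ℝ hFG) hdim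
  refine hFG.antisymm fun g hg => ?_
  have hgp : l (g -ᵥ p) = 0 := hker (hspan ▸ vsub_mem_vectorSpan ℝ hg (hFG hp))
  rw [vsub_eq_sub, map_sub, sub_eq_zero] at hgp
  exact (hmem g).2 ⟨hG.subset hg, fun w hw => hgp ▸ ((hmem p).1 hp).2 w hw⟩

theorem two_le_pdim_of_not_collinear {F : Set (Pt d)} {x y z : Pt d}
    (h : ¬ Collinear ℝ {x, y, z}) (hxF : x ∈ F) (hyF : y ∈ F) (hzF : z ∈ F) : 2 ≤ pdim F := by
  rw [collinear_iff_finrank_le_one, not_le] at h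
  exact h.trans_le (Submodule.finrank_mono (vectorSpan_mono ℝ (by simp [insert_subset_iff, *])))

end Polytope

section Chains

variable {d : ℕ} {O : Pt d → Pt d → Prop} {u v w x y z : Pt d} {c c₁ c₂ : List (Pt d)}

theorem not_reflTransGen_of_transGen (hac : ∀ x, ¬ TransGen O x x) (h : TransGen O x y) :
    ¬ ReflTransGen O y x :=
  fun h' => hac x (h.trans_left h')

theorem eq_of_reflTransGen_of_reflTransGen (hac : ∀ x, ¬ TransGen O x x)
    (h : ReflTransGen O x y) (h' : ReflTransGen O y x) : x = y :=
  (reflTransGen_iff_eq_or_transGen.1 h).elim Eq.symm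
    fun h => (not_reflTransGen_of_transGen hac h h').elim

theorem SatChain.isChain (h : SatChain O u v c) : c.IsChain O := h.1

theorem SatChain.singleton (v : Pt d) : SatChain O v v [v] :=
  ⟨List.isChain_singleton v, rfl, rfl⟩

theorem SatChain.exists_eq_cons (h : SatChain O u v c) : ∃ t, c = u :: t := by
  obtain ⟨-, hh, -⟩ := h
  cases c with
  | nil => simp at hh
  | cons a t => exact ⟨t, by simpa using hh⟩

theorem satChain_cons_cons_iff {t : List (Pt d)} :
    SatChain O u v (u :: w :: t) ↔ O u w ∧ SatChain O w v (w :: t) := by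
  constructor
  · rintro ⟨hc, -, hl⟩
    exact ⟨(List.isChain_cons_cons.1 hc).1, (List.isChain_cons_cons.1 hc).2, rfl, by simpa using hl⟩
  · rintro ⟨hO, hc, -, hl⟩
    exact ⟨List.isChain_cons_cons.2 ⟨hO, hc⟩, rfl, by simpa using hl⟩

theorem SatChain.cons (huw : O u w) (h : SatChain O w v c) : SatChain O u v (u :: c) := by
  obtain ⟨t, rfl⟩ := h.exists_eq_cons
  exact satChain_cons_cons_iff.2 ⟨huw, h⟩

theorem SatChain.getLast_mem (h : SatChain O u v c) : v ∈ c :=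
  List.mem_of_getLast? h.2.2

theorem SatChain.head_mem (h : SatChain O u v c) : u ∈ c :=
  List.mem_of_head? h.2.1

theorem SatChain.pairwise (h : SatChain O u v c) : c.Pairwise (TransGen O) :=
  (h.isChain.imp fun _ _ => TransGen.single).pairwise

theorem SatChain.reflTransGen (h : SatChain O u v c) : ReflTransGen O u v := by
  obtain ⟨t, rfl⟩ := h.exists_eq_cons
  exact List.relationReflTransGen_of_exists_isChain_cons t h.isChain
    (Option.some_inj.1 ((List.getLast?_eq_some_getLast _).symm.trans h.2.2))

theorem exists_satChain (h : ReflTransGen O u v) : ∃ c, SatChain O u v c := by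
  obtain ⟨t, ht, hlast⟩ := List.exists_isChain_cons_of_relationReflTransGen h
  exact ⟨u :: t, ht, rfl, by rw [List.getLast?_eq_some_getLast (List.cons_ne_nil u t), hlast]⟩

theorem SatChain.append (h₁ : SatChain O u w c₁) (h₂ : SatChain O w v (w :: c₂)) :
    SatChain O u v (c₁ ++ c₂) := by
  obtain ⟨t, rfl⟩ := h₁.exists_eq_cons
  refine ⟨h₁.isChain.append h₂.isChain.tail fun a ha b hb => ?_, rfl, ?_⟩
  · rw [h₁.2.2, Option.mem_some_iff] at ha
    exact ha ▸ h₂.isChain.rel_head? hb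
  · cases c₂ with
    | nil =>
      obtain rfl : w = v := by simpa using h₂.2.2
      simpa using h₁.2.2
    | cons b c₂ =>
      have hl := h₂.2.2
      rw [List.getLast?_cons_cons] at hl
      rw [List.getLast?_append, hl]
      rfl

theorem SatChain.append_append {a : Pt d} {ρ σ : List (Pt d)} (hρ : SatChain O u a (ρ ++ [a]))
    (h : SatChain O a w c) (hσ : SatChain O w v (w :: σ)) : SatChain O u v (ρ ++ c ++ σ) := by
  obtain ⟨t, rfl⟩ := h.exists_eq_cons
  simpa using (hρ.append h).append hσ

theorem SatChain.split (h : SatChain O u v (c₁ ++ z :: c₂)) :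
    SatChain O u z (c₁ ++ [z]) ∧ SatChain O z v (z :: c₂) := by
  have hch : (c₁ ++ [z] ++ c₂).IsChain O := by simpa using h.isChain
  refine ⟨⟨hch.left_of_append, ?_, by simp⟩, ⟨h.isChain.right_of_append, rfl, ?_⟩⟩
  · cases c₁ <;> simpa using h.2.1
  · simpa [List.getLast?_append] using h.2.2

theorem SatChain.transGen_of_mem_left (h : SatChain O u v (c₁ ++ z :: c₂)) (hy : y ∈ c₁) :
    TransGen O y z :=
  (List.pairwise_append.1 h.pairwise).2.2 y hy z List.mem_cons_self

theorem SatChain.transGen_of_mem_right (h : SatChain O u v (c₁ ++ z :: c₂)) (hy : y ∈ c₂) :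
    TransGen O z y :=
  (List.pairwise_cons.1 (List.pairwise_append.1 h.pairwise).2.1).1 y hy

theorem SatChain.reflTransGen_of_mem (h : SatChain O u v c) (hz : z ∈ c) :
    ReflTransGen O u z ∧ ReflTransGen O z v := by
  obtain ⟨c₁, c₂, rfl⟩ := List.append_of_mem hz
  exact ⟨h.split.1.reflTransGen, h.split.2.reflTransGen⟩

theorem SatChain.eq_singleton (hac : ∀ x, ¬ TransGen O x x) (h : SatChain O v v c) : c = [v] := by
  obtain ⟨t, rfl⟩ := h.exists_eq_cons
  cases t with
  | nil => rfl
  | cons w t =>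
    obtain ⟨hvw, hw⟩ := satChain_cons_cons_iff.1 h
    exact (not_reflTransGen_of_transGen hac (.single hvw) hw.reflTransGen).elim

theorem SatChain.exists_cons_cons (h : SatChain O u v c) (huv : u ≠ v) :
    ∃ a t, c = u :: a :: t ∧ O u a ∧ SatChain O a v (a :: t) := by
  obtain ⟨_ | ⟨a, t⟩, rfl⟩ := h.exists_eq_cons
  · exact (huv (by simpa using h.2.2)).elim
  · exact ⟨a, t, rfl, satChain_cons_cons_iff.1 h⟩

theorem SatChain.mem_iff_eq_of_le_last (hac : ∀ x, ¬ TransGen O x x) (h : SatChain O u w c)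
    (hz : ReflTransGen O w z) : z ∈ c ↔ z = w :=
  ⟨fun hzc => eq_of_reflTransGen_of_reflTransGen hac (h.reflTransGen_of_mem hzc).2 hz,
    fun hzw => hzw ▸ h.getLast_mem⟩

theorem SatChain.mem_iff_eq_of_le_head (hac : ∀ x, ¬ TransGen O x x) (h : SatChain O w v c)
    (hz : ReflTransGen O z w) : z ∈ c ↔ z = w :=
  ⟨fun hzc => eq_of_reflTransGen_of_reflTransGen hac hz (h.reflTransGen_of_mem hzc).1,
    fun hzw => hzw ▸ h.head_mem⟩

theorem SatChain.exists_first_common (hac : ∀ x, ¬ TransGen O x x) {a b : Pt d}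
    (h₁ : SatChain O a v c₁) (h₂ : SatChain O b v c₂) :
    ∃ P₁ w S₁ P₂ S₂, c₁ = P₁ ++ w :: S₁ ∧ c₂ = P₂ ++ w :: S₂ ∧
      ∀ z ∈ c₁, z ∈ c₂ → z = w ∨ z ∈ S₁ ∧ z ∈ S₂ := by
  classical
  obtain ⟨w, hw⟩ : ∃ w, c₁.find? (· ∈ c₂) = some w :=
    Option.isSome_iff_exists.1
      (List.find?_isSome.2 ⟨v, h₁.getLast_mem, by simpa using h₂.getLast_mem⟩)
  obtain ⟨hwc₂, P₁, S₁, rfl, hP₁⟩ := List.find?_eq_some_iff_append.1 hw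
  obtain ⟨P₂, S₂, rfl⟩ := List.append_of_mem (by simpa using hwc₂)
  refine ⟨P₁, w, S₁, P₂, S₂, rfl, rfl, fun z hz₁ hz₂ => ?_⟩
  rcases List.mem_append.1 hz₁ with hz | hz
  · exact absurd hz₂ (by simpa using hP₁ z hz)
  rcases List.mem_cons.1 hz with rfl | hz
  · exact Or.inl rfl
  have hwz := h₁.transGen_of_mem_right hz
  refine Or.inr ⟨hz, ?_⟩
  rcases List.mem_append.1 hz₂ with hz' | hz'
  · exact (not_reflTransGen_of_transGen hac hwz (h₂.transGen_of_mem_left hz').to_reflTransGen).elim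
  rcases List.mem_cons.1 hz' with rfl | hz'
  · exact (hac z hwz).elim
  · exact hz'

theorem SatChain.mem_lower_or_mem_upper (hac : ∀ x, ¬ TransGen O x x)
    {A₁ B₁ A₂ B₂ : List (Pt d)} (h₁ : SatChain O u v (A₁ ++ x :: B₁))
    (h₂ : SatChain O u v (A₂ ++ x :: B₂)) (hz₁ : z ∈ A₁ ++ x :: B₁) (hz₂ : z ∈ A₂ ++ x :: B₂) :
    (z ∈ A₁ ++ [x] ∧ z ∈ A₂ ++ [x]) ∨ (z ∈ x :: B₁ ∧ z ∈ x :: B₂) := by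
  simp only [List.mem_append, List.mem_cons, List.not_mem_nil, or_false]
    at hz₁ hz₂ ⊢
  rcases hz₁ with hz₁ | rfl | hz₁
  · rcases hz₂ with hz₂ | rfl | hz₂
    · exact Or.inl ⟨Or.inl hz₁, Or.inl hz₂⟩
    · exact Or.inl ⟨Or.inr rfl, Or.inr rfl⟩
    · exact (not_reflTransGen_of_transGen hac (h₁.transGen_of_mem_left hz₁)
        (h₂.transGen_of_mem_right hz₂).to_reflTransGen).elim
  · exact Or.inl ⟨Or.inr rfl, Or.inr rfl⟩
  · rcases hz₂ with hz₂ | rfl | hz₂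
    · exact (not_reflTransGen_of_transGen hac (h₂.transGen_of_mem_left hz₂)
        (h₁.transGen_of_mem_right hz₁).to_reflTransGen).elim
    · exact Or.inr ⟨Or.inl rfl, Or.inl rfl⟩
    · exact Or.inr ⟨Or.inr hz₁, Or.inr hz₂⟩

end Chains

section Facial

variable {d : ℕ} {Q : Set (Pt d)} {O : Pt d → Pt d → Prop} {F : Set (Pt d)}
  {a b j p t v x y : Pt d}

theorem IsFacial.acyclic (hfac : IsFacial Q O) : ∀ x, ¬ TransGen O x x := hfac.1.2.2.2

theorem IsFacial.asymm (hfac : IsFacial Q O) (h : O x y) : ¬ O y x := hfac.1.2.2.1 x y h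

theorem IsFacial.pEdge (hfac : IsFacial Q O) (h : O x y) : PEdge Q x y := hfac.1.1 x y h

theorem IsFacial.ne_of_transGen (hfac : IsFacial Q O) (h : TransGen O x y) : x ≠ y :=
  fun hxy => hfac.acyclic x (hxy ▸ h)

theorem IsFacial.mem_extremePoints_of_reflTransGen (hfac : IsFacial Q O)
    (h : ReflTransGen O x y) (hx : x ∈ extremePoints ℝ Q) : y ∈ extremePoints ℝ Q := by
  induction h with
  | refl => exact hx
  | tail _ hstep _ => exact (hfac.pEdge hstep).right_mem_extremePoints

/-- The number of vertices above `v` drops along every edge. -/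
theorem IsFacial.wellFounded (hfac : IsFacial Q O) (hQ : IsPolytope Q) :
    WellFounded (flip (TransGen O)) := by
  let up (v : Pt d) : Set (Pt d) := {w | ReflTransGen O v w ∧ w ∈ extremePoints ℝ Q}
  refine Subrelation.wf (r := InvImage (· < ·) fun v => (up v).ncard) ?_
    (InvImage.wf _ wellFounded_lt)
  intro w v (hvw : TransGen O v w)
  obtain ⟨_, hv, -⟩ := TransGen.head'_iff.1 hvw
  refine Set.ncard_lt_ncard ⟨fun z hz => ⟨hvw.to_reflTransGen.trans hz.1, hz.2⟩, fun hsub => ?_⟩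
    (hQ.finite_extremePoints.subset fun _ hz => hz.2)
  exact not_reflTransGen_of_transGen hfac.acyclic hvw
    (hsub ⟨.refl, (hfac.pEdge hv).left_mem_extremePoints⟩).1

theorem IsFacial.exists_out_edge_of_ne_sink (hfac : IsFacial Q O) (hF : IsExposed ℝ Q F)
    (ht : IsSnkOf O F t) (hv : v ∈ extremePoints ℝ Q) (hvF : v ∈ F) (hvt : v ≠ t) :
    ∃ w, O v w ∧ w ∈ F := by
  by_contra! hcon
  have hsnk : IsSnkOf O F v :=
    ⟨inter_extremePoints_subset_extremePoints_of_subset hF.subset ⟨hvF, hv⟩,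
      fun y hy hvy => hcon y hvy hy⟩
  obtain ⟨_, -, huniq⟩ := (hfac.2 F hF ⟨v, hvF⟩).2
  exact hvt ((huniq v hsnk).trans (huniq t ht).symm)

theorem IsFacial.reflTransGen_sink (hfac : IsFacial Q O) (hQ : IsPolytope Q)
    (hF : IsExposed ℝ Q F) (ht : IsSnkOf O F t) (hv : v ∈ extremePoints ℝ Q) (hvF : v ∈ F) :
    ReflTransGen O v t := by
  induction v using (hfac.wellFounded hQ).induction with
  | _ v ih =>
    by_cases hvt : v = t
    · exact hvt ▸ .refl
    obtain ⟨w, hvw, hwF⟩ := hfac.exists_out_edge_of_ne_sink hF ht hv hvF hvt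
    exact .head hvw (ih w (.single hvw) (hfac.pEdge hvw).right_mem_extremePoints hwF)

theorem IsFacial.exists_twoFace (hfac : IsFacial Q O) (hds : DirSimple Q O) (ha : O p a)
    (hb : O p b) (hab : a ≠ b) :
    ∃ F, IsExposed ℝ Q F ∧ pdim F = 2 ∧ p ∈ F ∧ a ∈ F ∧ b ∈ F := by
  obtain ⟨⟨F, ⟨hF, hpF, hseg, -⟩, hdim⟩, -⟩ :=
    hds p (hfac.pEdge ha).left_mem_extremePoints {a, b} (by simp [ha, hb])
  exact ⟨F, hF, by rwa [Finset.card_pair hab] at hdim, hpF,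
    hseg a (by simp) (right_mem_segment ℝ p a), hseg b (by simp) (right_mem_segment ℝ p b)⟩

theorem IsFacial.isSrcOf_twoFace (hfac : IsFacial Q O) (hF : IsExposed ℝ Q F)
    (hdim : pdim F ≤ 2) (ha : O p a) (hb : O p b) (hab : a ≠ b) (hpF : p ∈ F) (haF : a ∈ F)
    (hbF : b ∈ F) : IsSrcOf O F p := by
  refine ⟨inter_extremePoints_subset_extremePoints_of_subset hF.subset
    ⟨hpF, (hfac.pEdge ha).left_mem_extremePoints⟩, fun y hyF hyp => ?_⟩
  exact not_three_pEdges_of_pdim_le_two hdim hpF haF hbF hyF (hfac.pEdge ha) (hfac.pEdge hb)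
    (hfac.pEdge hyp).symm hab (fun h => hfac.asymm ha (h ▸ hyp)) (fun h => hfac.asymm hb (h ▸ hyp))

theorem IsFacial.eq_sink_of_in_edges (hfac : IsFacial Q O) (hF : IsExposed ℝ Q F)
    (hdim : pdim F ≤ 2) (ht : IsSnkOf O F t) (hjF : j ∈ F) (ha : O a j) (hb : O b j)
    (hab : a ≠ b) (haF : a ∈ F) (hbF : b ∈ F) : j = t := by
  by_contra hjt
  obtain ⟨y, hjy, hyF⟩ := hfac.exists_out_edge_of_ne_sink hF ht
    (hfac.pEdge ha).right_mem_extremePoints hjF hjt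
  exact not_three_pEdges_of_pdim_le_two hdim hjF haF hbF hyF (hfac.pEdge ha).symm
    (hfac.pEdge hb).symm (hfac.pEdge hjy) hab (fun h => hfac.asymm ha (h ▸ hjy))
    (fun h => hfac.asymm hb (h ▸ hjy))

theorem IsHasse.not_reflTransGen (hhasse : IsHasse O) (hfac : IsFacial Q O) (ha : O p a)
    (hb : O p b) (hab : a ≠ b) : ¬ ReflTransGen O b a := fun hba => by
  rcases hhasse p a ha b (.single hb) hba with rfl | rfl
  exacts [hfac.acyclic _ (.single hb), hab rfl]

end Facial

section TwoFaces

variable {d : ℕ} {Q : Set (Pt d)} {O : Pt d → Pt d → Prop} {F : Set (Pt d)}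
  {a b e p t v z : Pt d}

/-- The invariant of the downward induction through `P(Q,O)` identifying sinks of 2-faces with
joins. -/
def TwoFaceClosedAt (Q : Set (Pt d)) (O : Pt d → Pt d → Prop) (v : Pt d) : Prop :=
  ∀ F, IsExposed ℝ Q F → pdim F = 2 → v ∈ F → ∀ t, IsSnkOf O F t →
    ∀ z, O v z → ReflTransGen O z t → z ∈ F

theorem mem_twoFace_of_closedAbove (hOC : ∀ e, TransGen O p e → TwoFaceClosedAt Q O e)
    (hF : IsExposed ℝ Q F) (hdim : pdim F = 2) (ht : IsSnkOf O F t) (hpe : TransGen O p e)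
    (heF : e ∈ F) (hez : ReflTransGen O e z) (hzt : ReflTransGen O z t) : z ∈ F := by
  induction hez with
  | refl => exact heF
  | tail hey hyz ih =>
    exact hOC _ (hpe.trans_left hey) F hF hdim (ih (.head hyz hzt)) t ht _ hyz hzt

/-- The join of `a` and `b` stays in the face; were it not the sink, it would have two in-edges
and an out-edge there. -/
theorem reflTransGen_sink_of_closedAbove (hQ : IsPolytope Q) (hfac : IsFacial Q O)
    (hhasse : IsHasse O) (hlat : SkLattice Q O)
    (hOC : ∀ e, TransGen O v e → TwoFaceClosedAt Q O e) (ha : O v a) (hb : O v b) (hab : a ≠ b)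
    (hF : IsExposed ℝ Q F) (hdim : pdim F = 2) (haF : a ∈ F) (hbF : b ∈ F)
    (ht : IsSnkOf O F t) (haz : ReflTransGen O a z) (hbz : ReflTransGen O b z) :
    ReflTransGen O t z := by
  have hae := (hfac.pEdge ha).right_mem_extremePoints
  have hbe := (hfac.pEdge hb).right_mem_extremePoints
  obtain ⟨j, -, haj, hbj, hjmin⟩ := (hlat a hae b hbe).1
  have hjt : ReflTransGen O j t := hjmin t (hF.isExtreme.extremePoints_subset_extremePoints ht.1)
    (hfac.reflTransGen_sink hQ hF ht hae haF) (hfac.reflTransGen_sink hQ hF ht hbe hbF)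
  have hmem : ∀ {c y}, O v c → c ∈ F → ReflTransGen O c y → ReflTransGen O y j → y ∈ F :=
    fun hvc hcF hcy hyj =>
      mem_twoFace_of_closedAbove hOC hF hdim ht (.single hvc) hcF hcy (hyj.trans hjt)
  obtain ⟨wa, hawa, hwaj⟩ := TransGen.tail'_iff.1 <|
    (reflTransGen_iff_eq_or_transGen.1 haj).resolve_left
      fun h => hhasse.not_reflTransGen hfac ha hb hab (h ▸ hbj)
  obtain ⟨wb, hbwb, hwbj⟩ := TransGen.tail'_iff.1 <|
    (reflTransGen_iff_eq_or_transGen.1 hbj).resolve_left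
      fun h => hhasse.not_reflTransGen hfac hb ha hab.symm (h ▸ haj)
  have hwawb : wa ≠ wb := by
    rintro rfl
    have hwae := (hfac.pEdge hwaj).left_mem_extremePoints
    exact hfac.acyclic wa (.head' hwaj (hjmin wa hwae hawa hbwb))
  have hj : j = t := hfac.eq_sink_of_in_edges hF hdim.le ht (hmem ha haF haj .refl) hwaj hwbj
    hwawb (hmem ha haF hawa (.single hwaj)) (hmem hb hbF hbwb (.single hwbj))
  exact hj ▸ hjmin z (hfac.mem_extremePoints_of_reflTransGen haz hae) haz hbz

/-- If `z ∉ F`, the 2-face `F'` spanned by `z` and an out-neighbour `y ∈ F` of `v` has its sink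
below `t`, so the edge of `F'` leaving `y` stays in `F`. Then `F ∩ F'` is a 2-dimensional face,
hence equal to `F'`, and contains `z`. -/
theorem twoFaceClosedAt_of_closedAbove (hQ : IsPolytope Q) (hfac : IsFacial Q O)
    (hds : DirSimple Q O) (hhasse : IsHasse O) (hlat : SkLattice Q O)
    (hOC : ∀ e, TransGen O v e → TwoFaceClosedAt Q O e) : TwoFaceClosedAt Q O v := by
  intro F hF hdim hvF t ht z hvz hzt
  by_contra hzF
  have hve := (hfac.pEdge hvz).left_mem_extremePoints
  have hze := (hfac.pEdge hvz).right_mem_extremePoints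
  have hvt : v ≠ t := by
    rintro rfl
    exact hfac.acyclic v (.head' hvz hzt)
  obtain ⟨y, hvy, hyF⟩ := hfac.exists_out_edge_of_ne_sink hF ht hve hvF hvt
  have hye := (hfac.pEdge hvy).right_mem_extremePoints
  have hyz : y ≠ z := fun h => hzF (h ▸ hyF)
  obtain ⟨F', hF', hdim', hvF', hyF', hzF'⟩ := hfac.exists_twoFace hds hvy hvz hyz
  obtain ⟨s, hs, -⟩ := (hfac.2 F' hF' ⟨v, hvF'⟩).2
  have hst : ReflTransGen O s t := reflTransGen_sink_of_closedAbove hQ hfac hhasse hlat hOC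
    hvy hvz hyz hF' hdim' hyF' hzF' hs (hfac.reflTransGen_sink hQ hF ht hye hyF) hzt
  have hys : y ≠ s := fun h => hhasse.not_reflTransGen hfac hvy hvz hyz
    (h ▸ hfac.reflTransGen_sink hQ hF' hs hze hzF')
  obtain ⟨y₂, hyy₂, hy₂F'⟩ := hfac.exists_out_edge_of_ne_sink hF' hs hye hyF' hys
  have hy₂e := (hfac.pEdge hyy₂).right_mem_extremePoints
  have hy₂F : y₂ ∈ F := mem_twoFace_of_closedAbove hOC hF hdim ht (.single hvy) hyF
    (.single hyy₂) ((hfac.reflTransGen_sink hQ hF' hs hy₂e hy₂F').trans hst)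
  have hvy₂ : v ≠ y₂ := hfac.ne_of_transGen (.tail (.single hvy) hyy₂)
  have h2 : 2 ≤ pdim (F ∩ F') := two_le_pdim_of_not_collinear
    (not_collinear_of_mem_extremePoints hve hye hy₂e (hfac.pEdge hvy).1 hvy₂ (hfac.pEdge hyy₂).1)
    ⟨hvF, hvF'⟩ ⟨hyF, hyF'⟩ ⟨hy₂F, hy₂F'⟩
  have hFF' : F ∩ F' = F' := (hF.inter hF').eq_of_subset_of_pdim_le hF' inter_subset_right
    ⟨v, hvF, hvF'⟩ (hdim' ▸ h2)
  exact hzF (hFF'.ge hzF').1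

theorem twoFaceClosedAt (hQ : IsPolytope Q) (hfac : IsFacial Q O) (hds : DirSimple Q O)
    (hhasse : IsHasse O) (hlat : SkLattice Q O) (v : Pt d) : TwoFaceClosedAt Q O v :=
  (hfac.wellFounded hQ).induction v fun _ ih =>
    twoFaceClosedAt_of_closedAbove hQ hfac hds hhasse hlat ih

end TwoFaces

section MovePaths

variable {d : ℕ} {Q : Set (Pt d)} {O : Pt d → Pt d → Prop} {P R : List (Pt d) → Prop}
  {W : Set (Pt d)} {a b u v w : Pt d} {c₁ c₂ c₃ ρ σ : List (Pt d)}

def MovePath (Q : Set (Pt d)) (O : Pt d → Pt d → Prop) (P : List (Pt d) → Prop)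
    (c₁ c₂ : List (Pt d)) : Prop :=
  ∃ (N : ℕ) (δ : ℕ → List (Pt d)), δ 0 = c₁ ∧ δ N = c₂ ∧
    (∀ i < N, MoveAdj Q O (δ i) (δ (i + 1))) ∧ ∀ i ≤ N, P (δ i)

theorem MovePath.refl (h : P c₁) : MovePath Q O P c₁ c₁ :=
  ⟨0, fun _ => c₁, rfl, rfl, by simp, fun _ _ => h⟩

theorem MovePath.single (hmove : MoveAdj Q O c₁ c₂) (h₁ : P c₁) (h₂ : P c₂) :
    MovePath Q O P c₁ c₂ := by
  refine ⟨1, fun i => if i = 0 then c₁ else c₂, by simp, by simp, fun i hi => ?_, fun i _ => ?_⟩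
  · obtain rfl : i = 0 := by omega
    simpa using hmove
  · dsimp only
    split_ifs
    exacts [h₁, h₂]

theorem MoveAdj.append_append (h : MoveAdj Q O c₁ c₂) (ρ σ : List (Pt d)) :
    MoveAdj Q O (ρ ++ c₁ ++ σ) (ρ ++ c₂ ++ σ) := by
  obtain ⟨F, hF, hdim, p, s, m₁, m₂, rfl, rfl, hrest⟩ := h
  exact ⟨F, hF, hdim, ρ ++ p, s ++ σ, m₁, m₂, by simp, by simp, hrest⟩

theorem MovePath.append_append {P' : List (Pt d) → Prop} (h : MovePath Q O P c₁ c₂)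
    (ρ σ : List (Pt d)) (hP : ∀ c, P c → P' (ρ ++ c ++ σ)) :
    MovePath Q O P' (ρ ++ c₁ ++ σ) (ρ ++ c₂ ++ σ) := by
  obtain ⟨N, δ, rfl, rfl, hmove, hδ⟩ := h
  exact ⟨N, fun i => ρ ++ δ i ++ σ, rfl, rfl, fun i hi => (hmove i hi).append_append ρ σ,
    fun i hi => hP _ (hδ i hi)⟩

theorem MovePath.exists_index (h₁ : MovePath Q O R c₁ c₂) (h₂ : MovePath Q O P c₂ c₃)
    (hRP : ∀ c, R c → P c) :
    ∃ (N : ℕ) (δ : ℕ → List (Pt d)) (k : ℕ), k ≤ N ∧ δ 0 = c₁ ∧ δ k = c₂ ∧ δ N = c₃ ∧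
      (∀ i < N, MoveAdj Q O (δ i) (δ (i + 1))) ∧ (∀ i ≤ N, P (δ i)) ∧ ∀ i ≤ k, R (δ i) := by
  obtain ⟨N₁, δ₁, h₁0, h₁N, h₁m, h₁R⟩ := h₁
  obtain ⟨N₂, δ₂, h₂0, h₂N, h₂m, h₂P⟩ := h₂
  let δ i := if i ≤ N₁ then δ₁ i else δ₂ (i - N₁)
  have hlo : ∀ i ≤ N₁, δ i = δ₁ i := fun i hi => if_pos hi
  have hhi : ∀ i, N₁ ≤ i → δ i = δ₂ (i - N₁) := fun i hi => by
    rcases hi.eq_or_lt with rfl | hi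
    · simp [δ, h₁N, h₂0]
    · exact if_neg (by omega)
  refine ⟨N₁ + N₂, δ, N₁, by omega, by rw [hlo 0 (by omega), h₁0], by rw [hlo N₁ le_rfl, h₁N],
    by rw [hhi _ (by omega), Nat.add_sub_cancel_left, h₂N], fun i hi => ?_, fun i hi => ?_,
    fun i hi => hlo i hi ▸ h₁R i hi⟩
  · rcases lt_or_ge i N₁ with h | h
    · rw [hlo i h.le, hlo (i + 1) h]
      exact h₁m i h
    · rw [hhi i h, hhi (i + 1) (by omega), show i + 1 - N₁ = i - N₁ + 1 by omega]
      exact h₂m _ (by omega)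
  · rcases le_or_gt i N₁ with h | h
    · exact hlo i h ▸ hRP _ (h₁R i h)
    · exact hhi i h.le ▸ h₂P _ (by omega)

theorem MovePath.trans (h₁ : MovePath Q O P c₁ c₂) (h₂ : MovePath Q O P c₂ c₃) :
    MovePath Q O P c₁ c₃ := by
  obtain ⟨N, δ, -, -, h0, -, hN, hmove, hP, -⟩ := h₁.exists_index h₂ fun _ => id
  exact ⟨N, δ, h0, hN, hmove, hP⟩

def ChainThrough (O : Pt d → Pt d → Prop) (u v : Pt d) (W : Set (Pt d)) (c : List (Pt d)) :
    Prop :=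
  SatChain O u v c ∧ ∀ z ∈ W, z ∈ c

def ChainsConnectedFrom (Q : Set (Pt d)) (O : Pt d → Pt d → Prop) (u : Pt d) : Prop :=
  ∀ v c₁ c₂, SatChain O u v c₁ → SatChain O u v c₂ →
    MovePath Q O (ChainThrough O u v {z | z ∈ c₁ ∧ z ∈ c₂}) c₁ c₂

theorem ChainsConnectedFrom.movePath_append_append (hcon : ChainsConnectedFrom Q O a)
    (h₁ : SatChain O a w c₁) (h₂ : SatChain O a w c₂) (hρ : SatChain O u a (ρ ++ [a]))
    (hσ : SatChain O w v (w :: σ)) (hW : ∀ z ∈ W, z ∈ ρ ∨ (z ∈ c₁ ∧ z ∈ c₂) ∨ z ∈ σ) :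
    MovePath Q O (ChainThrough O u v W) (ρ ++ c₁ ++ σ) (ρ ++ c₂ ++ σ) :=
  (hcon w c₁ c₂ h₁ h₂).append_append ρ σ fun c hc => ⟨hρ.append_append hc.1 hσ, fun z hz => by
    rcases hW z hz with h | h | h
    · simp [h]
    · simp [hc.2 z h]
    · simp [h]⟩

/-- Go up to the sink of the 2-face spanned by `u → a` and `u → b`, which is below `w` as it is
the join of `a` and `b`, then on to `w`. -/
theorem exists_moveAdj_detour (hQ : IsPolytope Q) (hfac : IsFacial Q O) (hds : DirSimple Q O)
    (hhasse : IsHasse O) (hlat : SkLattice Q O) (ha : O u a) (hb : O u b) (hab : a ≠ b)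
    (haw : ReflTransGen O a w) (hbw : ReflTransGen O b w) :
    ∃ m₁ m₂, SatChain O a w m₁ ∧ SatChain O b w m₂ ∧
      ∀ τ, MoveAdj Q O (u :: (m₁ ++ τ)) (u :: (m₂ ++ τ)) := by
  have hOC := twoFaceClosedAt hQ hfac hds hhasse hlat
  obtain ⟨F, hF, hdim, huF, haF, hbF⟩ := hfac.exists_twoFace hds ha hb hab
  obtain ⟨t, ht, -⟩ := (hfac.2 F hF ⟨u, huF⟩).2
  have hat := hfac.reflTransGen_sink hQ hF ht (hfac.pEdge ha).right_mem_extremePoints haF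
  have hbt := hfac.reflTransGen_sink hQ hF ht (hfac.pEdge hb).right_mem_extremePoints hbF
  have htw : ReflTransGen O t w := reflTransGen_sink_of_closedAbove hQ hfac hhasse hlat
    (fun e _ => hOC e) ha hb hab hF hdim haF hbF ht haw hbw
  obtain ⟨s₁, hs₁⟩ := exists_satChain hat
  obtain ⟨s₂, hs₂⟩ := exists_satChain hbt
  obtain ⟨r, hr⟩ := exists_satChain htw
  obtain ⟨r, rfl⟩ := hr.exists_eq_cons
  obtain ⟨s₁, rfl⟩ := hs₁.exists_eq_cons
  obtain ⟨s₂, rfl⟩ := hs₂.exists_eq_cons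
  have hinF : ∀ {c s}, O u c → c ∈ F → SatChain O c t s → ∀ z ∈ u :: s, z ∈ F := by
    intro c s huc hcF hs z hz
    rcases List.mem_cons.1 hz with rfl | hz
    · exact huF
    obtain ⟨hcz, hzt⟩ := hs.reflTransGen_of_mem hz
    exact mem_twoFace_of_closedAbove (fun e _ => hOC e) hF hdim ht (.single huc) hcF hcz hzt
  refine ⟨a :: s₁ ++ r, b :: s₂ ++ r, hs₁.append hr, hs₂.append hr, fun τ =>
    ⟨F, hF, hdim, [], r ++ τ, u :: a :: s₁, u :: b :: s₂, by simp, by simp, by simp [hab],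
      hinF ha haF hs₁, hinF hb hbF hs₂,
      ⟨u, rfl, rfl, hfac.isSrcOf_twoFace hF hdim.le ha hb hab huF haF hbF⟩,
      ⟨t, by simpa using hs₁.2.2, by simpa using hs₂.2.2, ht⟩⟩⟩

/-- Chains leaving `u` along different edges: move the lower part of the first chain onto the
detour through the 2-face at `u`, cross the face, then move down to the second chain and finally
its upper part, each by induction on a shorter interval. -/
theorem movePath_cons_of_ne (hQ : IsPolytope Q) (hfac : IsFacial Q O) (hds : DirSimple Q O)
    (hhasse : IsHasse O) (hlat : SkLattice Q O)
    (IH : ∀ u', TransGen O u u' → ChainsConnectedFrom Q O u') (ha : O u a) (hb : O u b)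
    (hab : a ≠ b) (h₁ : SatChain O a v c₁) (h₂ : SatChain O b v c₂) :
    MovePath Q O (ChainThrough O u v {z | z ∈ u :: c₁ ∧ z ∈ u :: c₂}) (u :: c₁) (u :: c₂) := by
  obtain ⟨P₁, w, S₁, P₂, S₂, rfl, rfl, hcommon⟩ := h₁.exists_first_common hfac.acyclic h₂
  obtain ⟨hP₁, hS₁⟩ := h₁.split
  obtain ⟨hP₂, hS₂⟩ := h₂.split
  obtain ⟨m₁, m₂, hm₁, hm₂, hmove⟩ := exists_moveAdj_detour hQ hfac hds hhasse hlat ha hb hab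
    hP₁.reflTransGen hP₂.reflTransGen
  set W := {z | z ∈ u :: (P₁ ++ w :: S₁) ∧ z ∈ u :: (P₂ ++ w :: S₂)}
  have hW : ∀ z ∈ W, z = u ∨ z = w ∨ z ∈ S₁ ∧ z ∈ S₂ := by
    rintro z ⟨hz₁, hz₂⟩
    rcases List.mem_cons.1 hz₁ with rfl | hz₁
    · exact Or.inl rfl
    rcases List.mem_cons.1 hz₂ with rfl | hz₂
    · exact Or.inl rfl
    exact Or.inr (hcommon z hz₁ hz₂)
  have hW' : ∀ {c c' : List (Pt d)}, w ∈ c → w ∈ c' →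
      ∀ z ∈ W, z ∈ [u] ∨ (z ∈ c ∧ z ∈ c') ∨ z ∈ S₁ := by
    intro c c' hw hw' z hz
    rcases hW z hz with rfl | rfl | ⟨h, -⟩
    exacts [Or.inl (List.mem_singleton_self z), Or.inr (Or.inl ⟨hw, hw'⟩), Or.inr (Or.inr h)]
  have hua : SatChain O u a ([u] ++ [a]) := (SatChain.singleton a).cons ha
  have hub : SatChain O u b ([u] ++ [b]) := (SatChain.singleton b).cons hb
  have hthrough : ∀ {c}, SatChain O u v (u :: (c ++ S₁)) → w ∈ c →
      ChainThrough O u v W (u :: (c ++ S₁)) := fun hc hw => ⟨hc, fun z hz => by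
    rcases hW z hz with rfl | rfl | ⟨h, -⟩ <;> simp [*]⟩
  have step₁ : MovePath Q O (ChainThrough O u v W) (u :: (P₁ ++ w :: S₁)) (u :: (m₁ ++ S₁)) := by
    simpa using (IH a (.single ha)).movePath_append_append hP₁ hm₁ hua hS₁
      (hW' hP₁.getLast_mem hm₁.getLast_mem)
  have step₂ : MovePath Q O (ChainThrough O u v W) (u :: (m₁ ++ S₁)) (u :: (m₂ ++ S₁)) :=
    .single (hmove S₁) (hthrough (by simpa using hua.append_append hm₁ hS₁) hm₁.getLast_mem)
      (hthrough (by simpa using hub.append_append hm₂ hS₁) hm₂.getLast_mem)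
  have step₃ : MovePath Q O (ChainThrough O u v W) (u :: (m₂ ++ S₁)) (u :: (P₂ ++ w :: S₁)) := by
    simpa using (IH b (.single hb)).movePath_append_append hm₂ hP₂ hub hS₁
      (hW' hm₂.getLast_mem hP₂.getLast_mem)
  have step₄ : MovePath Q O (ChainThrough O u v W) (u :: (P₂ ++ w :: S₁))
      (u :: (P₂ ++ w :: S₂)) := by
    simpa using (IH w (.head' ha hP₁.reflTransGen)).movePath_append_append (ρ := u :: P₂)
      (σ := []) hS₁ hS₂ (hP₂.cons hb) (.singleton v) fun z hz => by
        rcases hW z hz with rfl | rfl | ⟨h₁, h₂⟩ <;> simp [*]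
  exact step₁.trans (step₂.trans (step₃.trans step₄))

theorem chainsConnectedFrom (hQ : IsPolytope Q) (hfac : IsFacial Q O) (hds : DirSimple Q O)
    (hhasse : IsHasse O) (hlat : SkLattice Q O) (u : Pt d) : ChainsConnectedFrom Q O u := by
  induction u using (hfac.wellFounded hQ).induction with
  | _ u IH =>
  intro v c₁ c₂ h₁ h₂
  by_cases huv : u = v
  · subst huv
    rw [h₁.eq_singleton hfac.acyclic, h₂.eq_singleton hfac.acyclic]
    exact .refl ⟨.singleton u, fun z hz => hz.1⟩
  obtain ⟨a, t₁, rfl, ha, ht₁⟩ := h₁.exists_cons_cons huv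
  obtain ⟨b, t₂, rfl, hb, ht₂⟩ := h₂.exists_cons_cons huv
  by_cases hab : a = b
  · subst hab
    simpa using (IH a (.single ha)).movePath_append_append (ρ := [u]) (σ := [])
      (W := {z | z ∈ u :: a :: t₁ ∧ z ∈ u :: a :: t₂}) ht₁ ht₂ ((SatChain.singleton a).cons ha)
      (.singleton v) fun z ⟨hz₁, hz₂⟩ => by
        rcases List.mem_cons.1 hz₁ with rfl | hz₁
        · simp
        rcases List.mem_cons.1 hz₂ with rfl | hz₂
        · simp
        exact Or.inr (Or.inl ⟨hz₁, hz₂⟩)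
  · exact movePath_cons_of_ne hQ hfac hds hhasse hlat IH ha hb hab ht₁ ht₂

end MovePaths

section Phases

variable {d : ℕ} {Q : Set (Pt d)} {O : Pt d → Pt d → Prop} {u v x : Pt d}
  {A₁ B₁ A₂ B₂ : List (Pt d)}

theorem movePath_replace_lower (hac : ∀ x, ¬ TransGen O x x) (hconn : ChainsConnectedFrom Q O u)
    (h₁ : SatChain O u v (A₁ ++ x :: B₁)) (h₂ : SatChain O u v (A₂ ++ x :: B₂)) :
    MovePath Q O (fun c => ChainThrough O u v {z | z ∈ A₁ ++ x :: B₁ ∧ z ∈ A₂ ++ x :: B₂} c ∧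
      ∀ z, ReflTransGen O x z → (z ∈ c ↔ z ∈ A₁ ++ x :: B₁)) (A₁ ++ x :: B₁) (A₂ ++ x :: B₁) := by
  obtain ⟨hA₁, hB₁⟩ := h₁.split
  obtain ⟨hA₂, -⟩ := h₂.split
  simpa using (hconn x _ _ hA₁ hA₂).append_append [] B₁ (P' := fun c =>
      ChainThrough O u v {z | z ∈ A₁ ++ x :: B₁ ∧ z ∈ A₂ ++ x :: B₂} c ∧
      ∀ z, ReflTransGen O x z → (z ∈ c ↔ z ∈ A₁ ++ x :: B₁)) fun c ⟨hc, hcW⟩ => by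
    rw [List.nil_append]
    refine ⟨⟨hc.append hB₁, fun z ⟨hz₁, hz₂⟩ => ?_⟩, fun z hz => ?_⟩
    · rcases h₁.mem_lower_or_mem_upper hac h₂ hz₁ hz₂ with h | ⟨h, -⟩
      · simp [hcW z h]
      · rcases List.mem_cons.1 h with rfl | h <;> simp [hc.getLast_mem, h]
    · rw [show A₁ ++ x :: B₁ = A₁ ++ [x] ++ B₁ by simp, List.mem_append, List.mem_append,
        hc.mem_iff_eq_of_le_last hac hz, hA₁.mem_iff_eq_of_le_last hac hz]

theorem movePath_replace_upper (hac : ∀ x, ¬ TransGen O x x) (hconn : ChainsConnectedFrom Q O x)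
    (h₁ : SatChain O u v (A₁ ++ x :: B₁)) (h₂ : SatChain O u v (A₂ ++ x :: B₂)) :
    MovePath Q O (ChainThrough O u v {z | z ∈ A₁ ++ x :: B₁ ∧ z ∈ A₂ ++ x :: B₂})
      (A₂ ++ x :: B₁) (A₂ ++ x :: B₂) := by
  obtain ⟨hA₂, hB₂⟩ := h₂.split
  simpa using hconn.movePath_append_append (ρ := A₂) (σ := [])
    (W := {z | z ∈ A₁ ++ x :: B₁ ∧ z ∈ A₂ ++ x :: B₂}) h₁.split.2 hB₂ hA₂ (.singleton v)
    fun z ⟨hz₁, hz₂⟩ => by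
      rcases h₁.mem_lower_or_mem_upper hac h₂ hz₁ hz₂ with ⟨-, h⟩ | h
      · rcases List.mem_append.1 h with h | h <;> simp_all
      · exact Or.inr (Or.inl h)

end Phases

theorem lower_segment_transformed_first_general {d : ℕ} (Q : Set (Pt d)) (O : Pt d → Pt d → Prop)
    (hQ : IsPolytope Q) (hfac : IsFacial Q O) (hds : DirSimple Q O)
    (hhasse : IsHasse O) (hlat : SkLattice Q O)
    (u₀ v₀ : Pt d)
    (γ1 γ2 : List (Pt d)) (h1 : SatChain O u₀ v₀ γ1) (h2 : SatChain O u₀ v₀ γ2)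
    (x' : Pt d)
    (hx'1 : x' ∈ γ1) (hx'2 : x' ∈ γ2) :
    ∃ (N : ℕ) (δ : ℕ → List (Pt d)) (k : ℕ), k ≤ N ∧
      δ 0 = γ1 ∧ δ N = γ2 ∧
      (∀ i < N, MoveAdj Q O (δ i) (δ (i + 1))) ∧
      (∀ i ≤ N, SatChain O u₀ v₀ (δ i) ∧ ∀ z, z ∈ γ1 → z ∈ γ2 → z ∈ δ i) ∧
      (∀ i ≤ k, ∀ z, Relation.ReflTransGen O x' z → Relation.ReflTransGen O z v₀ →
        (z ∈ δ i ↔ z ∈ γ1)) ∧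
      (∀ z, Relation.ReflTransGen O u₀ z → Relation.ReflTransGen O z x' →
        (z ∈ δ k ↔ z ∈ γ2)) := by
  have hac := hfac.acyclic
  have hconn := chainsConnectedFrom hQ hfac hds hhasse hlat
  obtain ⟨A₁, B₁, rfl⟩ := List.append_of_mem hx'1
  obtain ⟨A₂, B₂, rfl⟩ := List.append_of_mem hx'2
  obtain ⟨N, δ, k, hkN, h0, hk, hN, hmove, hP, hR⟩ :=
    (movePath_replace_lower hac (hconn u₀) h1 h2).exists_index
      (movePath_replace_upper hac (hconn x') h1 h2) fun _ hc => hc.1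
  refine ⟨N, δ, k, hkN, h0, hN, hmove, fun i hi => ⟨(hP i hi).1, fun z hz₁ hz₂ =>
    (hP i hi).2 z ⟨hz₁, hz₂⟩⟩, fun i hi z hz _ => (hR i hi).2 z hz, fun z _ hz => ?_⟩
  rw [hk, List.mem_append, List.mem_append, h1.split.2.mem_iff_eq_of_le_head hac hz,
    h2.split.2.mem_iff_eq_of_le_head hac hz]

/-- Let `Q` be `O`-directionally simple with `O` a facial
orientation which is the Hasse diagram of a lattice `L = P(Q,O)`, and let
`γ1, γ2` be maximal chains of `L` (saturated chains from the global source `u₀`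
to the global sink `v₀`). Suppose `x <_L x'` both lie on `γ1` and `γ2`, with `x`
followed by distinct elements in `γ1` and `γ2`. Then there is a path from `γ1`
to `γ2` in the move graph, all of whose chains contain every vertex of
`γ1 ∩ γ2`, together with an index `k` such that every chain up to step `k`
agrees with `γ1` on `[x', v₀]`, and the chain at step `k` agrees with `γ2` on
`[u₀, x']`. -/
theorem lower_segment_transformed_first {d : ℕ} (Q : Set (Pt d)) (O : Pt d → Pt d → Prop)
    (hQ : IsPolytope Q) (hfac : IsFacial Q O) (hds : DirSimple Q O)
    (hhasse : IsHasse O) (hlat : SkLattice Q O)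
    (u₀ v₀ : Pt d) (hsrc : IsSrcOf O Q u₀) (hsnk : IsSnkOf O Q v₀)
    (γ1 γ2 : List (Pt d)) (h1 : SatChain O u₀ v₀ γ1) (h2 : SatChain O u₀ v₀ γ2)
    (x x' : Pt d) (hxx' : Relation.TransGen O x x')
    (hx1 : x ∈ γ1) (hx2 : x ∈ γ2) (hx'1 : x' ∈ γ1) (hx'2 : x' ∈ γ2)
    (y1 y2 : Pt d) (hy : y1 ≠ y2)
    (hy1 : [x, y1] <:+: γ1) (hy2 : [x, y2] <:+: γ2) :
    ∃ (N : ℕ) (δ : ℕ → List (Pt d)) (k : ℕ), k ≤ N ∧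
      δ 0 = γ1 ∧ δ N = γ2 ∧
      (∀ i < N, MoveAdj Q O (δ i) (δ (i + 1))) ∧
      (∀ i ≤ N, SatChain O u₀ v₀ (δ i) ∧ ∀ z, z ∈ γ1 → z ∈ γ2 → z ∈ δ i) ∧
      (∀ i ≤ k, ∀ z, Relation.ReflTransGen O x' z → Relation.ReflTransGen O z v₀ →
        (z ∈ δ i ↔ z ∈ γ1)) ∧
      (∀ z, Relation.ReflTransGen O u₀ z → Relation.ReflTransGen O z x' →
        (z ∈ δ k ↔ z ∈ γ2)) :=
  lower_segment_transformed_first_general Q O hQ hfac hds hhasse hlat u₀ v₀ γ1 γ2 h1 h2 x' hx'1 hx'2
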